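/- arXiv:1402.0433 — 2 statements merged into one kernel-verified Lean document; each statement's English description precedes it below -/
import Mathlib

section
/- For any nonnegative integers $n$ and $k$, the 2-adic valuation of $\Phi_n(k) = \frac{1}{n!}\sum_i \binom{n}{2i+1}(2i)^k$ is nonnegative. -/
/-!
For `p ∈ ℤ[X]` put `Eₙ(p) = ∑ᵢ C(n,2i) p(2i)` and `Oₙ(p) = ∑ᵢ C(n,2i+1) p(2i+1)`, so that
`Φₙ(k) = Oₙ((X-1)ᵏ)/n!`. From `j·C(n+1,j) = (n+1)·C(n,j-1)` one gets
`Eₙ₊₁(X q) = (n+1)·Oₙ(q(X+1))` and `Oₙ₊₁(X q) = (n+1)·Eₙ(q(X+1))`, while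
`Eₙ₊₁(c) = Oₙ₊₁(c) = c·2ⁿ`. Splitting `p = X q + p(0)` and inducting on the degree, `Eₙ(p)/n!`
and `Oₙ(p)/n!` are 2-integral, since the only new denominators are those of `2ⁿ/(n+1)!`, and
`ν₂((n+1)!) ≤ n` by Legendre's formula.
-/

/-- `Φ n k = (1/n!) ∑_i C(n, 2i+1) (2i)^k`, with the convention `0^0 = 1`. -/
def Phi (n k : ℕ) : ℚ :=
  (1 / (Nat.factorial n : ℚ)) *
    ∑ i ∈ Finset.range (n + 1), (Nat.choose n (2 * i + 1) : ℚ) * ((2 * i : ℕ) : ℚ) ^ k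

open Polynomial Finset Nat

theorem Rat.padicValuation_le_one_iff_padicValRat_nonneg {p : ℕ} [Fact p.Prime] {x : ℚ}
    (hx : x ≠ 0) : Rat.padicValuation p x ≤ 1 ↔ 0 ≤ padicValRat p x := by
  simp only [Rat.padicValuation, Valuation.coe_mk, MonoidWithZeroHom.coe_mk, ZeroHom.coe_mk,
    if_neg hx]
  rw [← WithZero.exp_zero, WithZero.exp_le_exp]
  omega

theorem two_pow_div_factorial_succ_mem (n : ℕ) :
    (2 : ℚ) ^ n / (n + 1)! ∈ (Rat.padicValuation 2).integer := by
  have hfac : ((n + 1)! : ℚ) ≠ 0 := by positivity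
  rw [Valuation.mem_integer_iff, Rat.padicValuation_le_one_iff_padicValRat_nonneg (by positivity),
    padicValRat.div (by positivity) hfac, padicValRat.pow, padicValRat.of_nat]
  have h2 : padicValRat 2 (2 : ℚ) = 1 := by exact_mod_cast padicValRat.self one_lt_two
  have := padicValNat_factorial_lt_of_ne_zero 2 n.add_one_ne_zero
  rw [h2]
  omega

theorem Finset.sum_range_two_mul {M : Type*} [AddCommMonoid M] (f : ℕ → M) (m : ℕ) :
    ∑ j ∈ range (2 * m), f j = ∑ i ∈ range m, (f (2 * i) + f (2 * i + 1)) := by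
  induction m with
  | zero => simp
  | succ m ih => rw [mul_add_one, sum_range_succ, sum_range_succ, sum_range_succ, ih, add_assoc]

theorem Nat.sum_range_choose_two_mul_add_choose_two_mul_add_one {n N : ℕ} (h : n < 2 * N) :
    ∑ i ∈ range N, (n.choose (2 * i) + n.choose (2 * i + 1)) = 2 ^ n := by
  rw [← sum_range_two_mul (n.choose ·), ← sum_range_choose n]
  exact (sum_subset (range_subset_range.2 h) fun j _ hj =>
    choose_eq_zero_of_lt (by simpa using hj)).symm

theorem Nat.sum_range_choose_succ_two_mul_add_one (n : ℕ) :
    ∑ i ∈ range (n + 2), (n + 1).choose (2 * i + 1) = 2 ^ n := by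
  simp only [choose_succ_succ]
  exact sum_range_choose_two_mul_add_choose_two_mul_add_one (by omega)

theorem Nat.sum_range_choose_succ_two_mul (n : ℕ) :
    ∑ i ∈ range (n + 2), (n + 1).choose (2 * i) = 2 ^ n := by
  have htotal := sum_range_choose_two_mul_add_choose_two_mul_add_one (n := n + 1) (N := n + 2)
    (by omega)
  rw [sum_add_distrib, sum_range_choose_succ_two_mul_add_one, pow_succ] at htotal
  omega

noncomputable def evenChooseSum (n : ℕ) (p : ℤ[X]) : ℤ :=
  ∑ i ∈ range (n + 1), (n.choose (2 * i) : ℤ) * p.eval (2 * i : ℤ)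

noncomputable def oddChooseSum (n : ℕ) (p : ℤ[X]) : ℤ :=
  ∑ i ∈ range (n + 1), (n.choose (2 * i + 1) : ℤ) * p.eval (2 * i + 1 : ℤ)

theorem evenChooseSum_add (n : ℕ) (p q : ℤ[X]) :
    evenChooseSum n (p + q) = evenChooseSum n p + evenChooseSum n q := by
  simp only [evenChooseSum, eval_add, mul_add, sum_add_distrib]

theorem oddChooseSum_add (n : ℕ) (p q : ℤ[X]) :
    oddChooseSum n (p + q) = oddChooseSum n p + oddChooseSum n q := by
  simp only [oddChooseSum, eval_add, mul_add, sum_add_distrib]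

theorem evenChooseSum_succ_C (n : ℕ) (c : ℤ) : evenChooseSum (n + 1) (C c) = c * 2 ^ n := by
  simp only [evenChooseSum, eval_C, ← sum_mul]
  rw [← Nat.cast_sum, sum_range_choose_succ_two_mul]
  push_cast; ring

theorem oddChooseSum_succ_C (n : ℕ) (c : ℤ) : oddChooseSum (n + 1) (C c) = c * 2 ^ n := by
  simp only [oddChooseSum, eval_C, ← sum_mul]
  rw [← Nat.cast_sum, sum_range_choose_succ_two_mul_add_one]
  push_cast; ring

theorem evenChooseSum_succ_X_mul (n : ℕ) (q : ℤ[X]) :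
    evenChooseSum (n + 1) (X * q) = (n + 1) * oddChooseSum n (taylor 1 q) := by
  rw [evenChooseSum, sum_range_succ', oddChooseSum, mul_sum]
  simp only [mul_zero, Nat.cast_zero, eval_mul, eval_X, zero_mul, add_zero]
  refine sum_congr rfl fun i _ => ?_
  have h : ((n + 1) * n.choose (2 * i + 1) : ℤ) = (n + 1).choose (2 * (i + 1)) * (2 * i + 2) := by
    exact_mod_cast add_one_mul_choose_eq n (2 * i + 1)
  rw [taylor_eval]
  push_cast
  rw [show 2 * ((i : ℤ) + 1) = 2 * i + 1 + 1 by ring]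
  linear_combination (-(eval (2 * i + 1 + 1) q)) * h

theorem oddChooseSum_succ_X_mul (n : ℕ) (q : ℤ[X]) :
    oddChooseSum (n + 1) (X * q) = (n + 1) * evenChooseSum n (taylor 1 q) := by
  rw [oddChooseSum, sum_range_succ, choose_eq_zero_of_lt (by omega : n + 1 < 2 * (n + 1) + 1),
    evenChooseSum, mul_sum]
  simp only [Nat.cast_zero, zero_mul, add_zero]
  refine sum_congr rfl fun i _ => ?_
  have h : ((n + 1) * n.choose (2 * i) : ℤ) = (n + 1).choose (2 * i + 1) * (2 * i + 1) := by
    exact_mod_cast add_one_mul_choose_eq n (2 * i)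
  rw [taylor_eval, eval_mul, eval_X]
  linear_combination (-(eval (2 * (i : ℤ) + 1) q)) * h

theorem evenChooseSum_succ (n : ℕ) (p : ℤ[X]) :
    evenChooseSum (n + 1) p =
      (n + 1) * oddChooseSum n (taylor 1 (divX p)) + p.coeff 0 * 2 ^ n := by
  conv_lhs => rw [← X_mul_divX_add p]
  rw [evenChooseSum_add, evenChooseSum_succ_X_mul, evenChooseSum_succ_C]

theorem oddChooseSum_succ (n : ℕ) (p : ℤ[X]) :
    oddChooseSum (n + 1) p =
      (n + 1) * evenChooseSum n (taylor 1 (divX p)) + p.coeff 0 * 2 ^ n := by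
  conv_lhs => rw [← X_mul_divX_add p]
  rw [oddChooseSum_add, oddChooseSum_succ_X_mul, oddChooseSum_succ_C]

theorem add_one_mul_add_mul_two_pow_div_factorial_mem {n : ℕ} {a : ℤ}
    (ha : (a : ℚ) / n ! ∈ (Rat.padicValuation 2).integer) (c : ℤ) :
    (((n + 1) * a + c * 2 ^ n : ℤ) : ℚ) / (n + 1)! ∈ (Rat.padicValuation 2).integer := by
  have hsplit : (((n + 1) * a + c * 2 ^ n : ℤ) : ℚ) / (n + 1)!
      = a / n ! + c * (2 ^ n / (n + 1)!) := by
    rw [factorial_succ]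
    push_cast
    field_simp
  rw [hsplit]
  exact add_mem ha (mul_mem (intCast_mem _ _) (two_pow_div_factorial_succ_mem n))

theorem chooseSums_div_factorial_mem (p : ℤ[X]) (n : ℕ) :
    (evenChooseSum n p : ℚ) / n ! ∈ (Rat.padicValuation 2).integer ∧
      (oddChooseSum n p : ℚ) / n ! ∈ (Rat.padicValuation 2).integer := by
  induction p using degree_lt_wf.induction generalizing n with
  | _ p ih =>
  rcases eq_or_ne p 0 with rfl | hp
  · simp [evenChooseSum, oddChooseSum]
  cases n with
  | zero =>
    simp only [factorial_zero, cast_one, div_one]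
    exact ⟨intCast_mem _ _, intCast_mem _ _⟩
  | succ n =>
    obtain ⟨heven, hodd⟩ :=
      ih (taylor 1 (divX p)) (by rw [degree_taylor]; exact degree_divX_lt hp) n
    rw [evenChooseSum_succ, oddChooseSum_succ]
    exact ⟨add_one_mul_add_mul_two_pow_div_factorial_mem hodd _,
      add_one_mul_add_mul_two_pow_div_factorial_mem heven _⟩

theorem Phi_eq_oddChooseSum_div_factorial (n k : ℕ) :
    Phi n k = oddChooseSum n ((X - 1) ^ k) / n ! := by
  simp [Phi, oddChooseSum, div_eq_inv_mul]

theorem Phi_val_nonneg (n k : ℕ) :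
    Phi n k = 0 ∨ 0 ≤ padicValRat 2 (Phi n k) := by
  have hmem := (chooseSums_div_factorial_mem ((X - 1) ^ k) n).2
  rw [← Phi_eq_oddChooseSum_div_factorial, Valuation.mem_integer_iff] at hmem
  rcases eq_or_ne (Phi n k) 0 with h0 | h0
  · exact Or.inl h0
  · exact Or.inr ((Rat.padicValuation_le_one_iff_padicValRat_nonneg h0).1 hmem)
end

section
/- For positive integers $n$ and nonnegative integers $k$, the integral identity $\frac{1}{n!}\sum_i \binom{2n}{2i+1} i^k = \sum_{d \ge 0} \frac{2^{d+1}\binom{n+d}{d}}{(2d+1)!!} S(k, n-1-d)$ holds, where $(2d+1)!! = \prod_{i=0}^{d}(2i+1)$ and $S$ is the Stirling number of the second kind. -/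
/-- Stirling number of the second kind, via the alternating sum formula. -/
def Stir (k m : ℕ) : ℚ :=
  (1 / (Nat.factorial m : ℚ)) *
    ∑ j ∈ Finset.range (m + 1), (-1 : ℚ) ^ (m - j) * (Nat.choose m j : ℚ) * (j : ℚ) ^ k

/-- The odd double factorial `(2d+1)!! = 1·3·⋯·(2d+1)`. -/
def oddDoubleFactorial (d : ℕ) : ℕ := ∏ i ∈ Finset.range (d + 1), (2 * i + 1)

/-!
For `a = 1 + X` and `b = 1 - X` we have `a + b = 2` and `-ab = X² - 1`, so the classical expansion
`(a^(N+1) - b^(N+1)) / (a - b) = ∑ₘ C(N-m, m) (a+b)^(N-2m) (-ab)^m` writes the odd polynomial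
`(1+X)^(2n) - (1-X)^(2n)` in powers of `X² - 1`. Comparing coefficients of `X^(2j+1)` expresses
`C(2n, 2j+1)` as a binomial transform `∑ₘ cₘ (-1)^(m-j) C(m, j)`. Multiplying by `j^k` and summing
over `j` turns the inner sums into `m! S(k, m)`, and `cₘ m! / n!` is the weight
`2^(d+1) C(n+d, d) / (2d+1)!!` with `d = n - 1 - m`.
-/

open Finset Polynomial Nat

section LucasSum

variable {R : Type*} [CommRing R]

/-- The Lucas sequence `U_{N+1}(s, -t)` in closed form. -/
def lucasSum (s t : R) (N : ℕ) : R :=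
  ∑ p ∈ antidiagonal N, (p.1.choose p.2 : R) * s ^ (p.1 - p.2) * t ^ p.2

lemma lucasSum_zero (s t : R) : lucasSum s t 0 = 1 := by
  simp [lucasSum]

lemma lucasSum_one (s t : R) : lucasSum s t 1 = s := by
  simp [lucasSum, Nat.sum_antidiagonal_succ]

-- The truncated exponent is harmless: for `i ≤ j` the binomial coefficient vanishes.
lemma choose_succ_mul_pow_sub (s : R) (i j : ℕ) :
    (i.choose (j + 1) : R) * s ^ (i - j) = s * ((i.choose (j + 1) : R) * s ^ (i - (j + 1))) := by
  rcases lt_or_ge j i with h | h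
  · rw [show i - j = i - (j + 1) + 1 by omega, pow_succ]
    ring
  · simp [Nat.choose_eq_zero_of_lt (Nat.lt_succ_of_le h)]

lemma lucasSum_add_two (s t : R) (N : ℕ) :
    lucasSum s t (N + 2) = s * lucasSum s t (N + 1) + t * lucasSum s t N := by
  have pascal (i j : ℕ) : ((i + 1).choose (j + 1) : R) * s ^ (i + 1 - (j + 1)) * t ^ (j + 1) =
      s * ((i.choose (j + 1) : R) * s ^ (i - (j + 1)) * t ^ (j + 1)) +
        t * ((i.choose j : R) * s ^ (i - j) * t ^ j) := by
    rw [Nat.choose_succ_succ', Nat.cast_add, Nat.add_sub_add_right, add_mul,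
      choose_succ_mul_pow_sub]
    ring
  rw [lucasSum, lucasSum, lucasSum, Nat.sum_antidiagonal_succ, Nat.sum_antidiagonal_succ',
    Nat.sum_antidiagonal_succ']
  simp only [pascal, sum_add_distrib, mul_add, mul_sum, choose_zero_succ, cast_zero, zero_mul,
    choose_zero_right, cast_one, one_mul, tsub_zero, pow_zero, mul_one, zero_add]
  ring

theorem sub_mul_lucasSum (a b : R) (N : ℕ) :
    (a - b) * lucasSum (a + b) (-(a * b)) N = a ^ (N + 1) - b ^ (N + 1) := by
  induction N using Nat.twoStepInduction with
  | zero => simp [lucasSum_zero]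
  | one => rw [lucasSum_one]; ring
  | more N ih₀ ih₁ =>
    rw [lucasSum_add_two, mul_add, mul_left_comm, ih₁, mul_left_comm, ih₀]
    ring

end LucasSum

lemma coeff_X_sub_one_pow {R : Type*} [CommRing R] (m j : ℕ) :
    (((X : R[X]) - 1) ^ m).coeff j = (-1) ^ (m - j) * m.choose j := by
  rw [← coeff_X_add_C_pow, C_neg, C_1, sub_eq_add_neg]

lemma coeff_one_sub_X_pow_two_mul_odd {R : Type*} [CommRing R] (n j : ℕ) :
    (((1 : R[X]) - X) ^ (2 * n)).coeff (2 * j + 1) = -((2 * n).choose (2 * j + 1) : R) := by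
  rw [← neg_sub, (even_two_mul n).neg_pow, coeff_X_sub_one_pow]
  rcases le_or_gt (2 * j + 1) (2 * n) with h | h
  · rw [Odd.neg_one_pow (by grind)]
    ring
  · simp [Nat.choose_eq_zero_of_lt h]

theorem choose_two_mul_odd_eq_sum (n j : ℕ) :
    ((2 * (n + 1)).choose (2 * j + 1) : ℚ) =
      ∑ m ∈ range (n + 1),
        ((2 * n + 1 - m).choose m : ℚ) * 2 ^ (2 * (n - m) + 1) * (-1) ^ (m - j) * m.choose j := by
  have h := congrArg (coeff · (2 * j + 1)) (sub_mul_lucasSum (1 + X : ℚ[X]) (1 - X) (2 * n + 1))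
  have e1 : (1 + X : ℚ[X]) - (1 - X) = C 2 * X := by rw [C_ofNat]; ring
  have e2 : (1 + X : ℚ[X]) + (1 - X) = C 2 := by rw [C_ofNat]; ring
  have e3 : -((1 + X : ℚ[X]) * (1 - X)) = expand ℚ 2 (X - 1) := by
    simp only [map_sub, expand_X, map_one]
    ring
  simp only [e1, e2, e3, lucasSum, mul_assoc, coeff_C_mul, coeff_X_mul, coeff_sub,
    coeff_one_add_X_pow, show 2 * n + 1 + 1 = 2 * (n + 1) by ring, coeff_one_sub_X_pow_two_mul_odd,
    finsetSum_coeff, ← map_pow, coeff_natCast_mul, coeff_expand_mul' two_pos,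
    coeff_X_sub_one_pow] at h
  rw [← Nat.sum_antidiagonal_swap] at h
  simp only [Prod.fst_swap, Prod.snd_swap] at h
  rw [Nat.sum_antidiagonal_eq_sum_range_succ
    (fun m i => (i.choose m : ℚ) * (2 ^ (i - m) * ((-1) ^ (m - j) * m.choose j))),
    ← sum_subset (range_subset_range.2 (by omega : n + 1 ≤ 2 * n + 1 + 1))] at h
  · rw [sum_congr rfl fun m hm => by rw [show 2 * n + 1 - m - m = 2 * (n - m) + 1 by grind]] at h
    simp only [← mul_assoc] at h
    linarith
  · intro m _ hm
    simp [Nat.choose_eq_zero_of_lt (by grind : 2 * n + 1 - m < m)]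

lemma factorial_mul_Stir_eq_sum_range (k : ℕ) {m K : ℕ} (h : m < K) :
    (m ! : ℚ) * Stir k m = ∑ j ∈ range K, (-1 : ℚ) ^ (m - j) * (m.choose j : ℚ) * (j : ℚ) ^ k := by
  rw [Stir, ← mul_assoc, mul_one_div_cancel (by positivity), one_mul]
  refine sum_subset (range_subset_range.2 h) fun j _ hj => ?_
  simp [Nat.choose_eq_zero_of_lt (by simpa using hj : m < j)]

theorem sum_choose_mul_pow_eq_sum_Stir (n k : ℕ) :
    ∑ i ∈ range (n + 1), ((2 * (n + 1)).choose (2 * i + 1) : ℚ) * (i : ℚ) ^ k =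
      ∑ m ∈ range (n + 1),
        ((2 * n + 1 - m).choose m : ℚ) * 2 ^ (2 * (n - m) + 1) * m ! * Stir k m := by
  simp_rw [choose_two_mul_odd_eq_sum, sum_mul]
  rw [sum_comm]
  refine sum_congr rfl fun m hm => ?_
  rw [mul_assoc _ (m ! : ℚ), factorial_mul_Stir_eq_sum_range k (mem_range.1 hm), mul_sum]
  exact sum_congr rfl fun i _ => by ring

lemma oddDoubleFactorial_eq_doubleFactorial (d : ℕ) : oddDoubleFactorial d = (2 * d + 1)‼ := by
  rw [oddDoubleFactorial, prod_range_succ', doubleFactorial_eq_prod_odd]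
  simp [mul_add]

lemma oddDoubleFactorial_mul_two_pow_mul_factorial (d : ℕ) :
    oddDoubleFactorial d * (2 ^ d * d !) = (2 * d + 1)! := by
  rw [oddDoubleFactorial_eq_doubleFactorial, factorial_eq_mul_doubleFactorial,
    doubleFactorial_two_mul]

lemma two_pow_mul_choose_div_oddDoubleFactorial (m d : ℕ) :
    (2 : ℚ) ^ (d + 1) * ((m + 2 * d + 1).choose d : ℚ) / oddDoubleFactorial d =
      2 ^ (2 * d + 1) * ((m + 2 * d + 1).choose m : ℚ) * m ! / (m + d + 1)! := by
  have hodf : (oddDoubleFactorial d : ℚ) * (2 ^ d * d !) = (2 * d + 1)! := by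
    exact_mod_cast oddDoubleFactorial_mul_two_pow_mul_factorial d
  have hodf_ne : (oddDoubleFactorial d : ℚ) ≠ 0 := by
    rw [oddDoubleFactorial_eq_doubleFactorial]
    exact_mod_cast (doubleFactorial_pos _).ne'
  rw [cast_choose ℚ (by omega : d ≤ m + 2 * d + 1), cast_choose ℚ (by omega : m ≤ m + 2 * d + 1),
    show m + 2 * d + 1 - d = m + d + 1 by omega, show m + 2 * d + 1 - m = 2 * d + 1 by omega, ← hodf]
  field_simp
  ring

theorem sum_choose_pow_eq_stirling_general (n k : ℕ) :
    (1 / (Nat.factorial n : ℚ)) *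
        ∑ i ∈ Finset.range n, (Nat.choose (2 * n) (2 * i + 1) : ℚ) * (i : ℚ) ^ k
      = ∑ d ∈ Finset.range n,
          (2 : ℚ) ^ (d + 1) * (Nat.choose (n + d) d : ℚ) / (oddDoubleFactorial d : ℚ)
            * Stir k (n - 1 - d) := by
  rcases n with _ | n
  · simp
  rw [sum_choose_mul_pow_eq_sum_Stir, mul_sum, ← sum_range_reflect]
  refine sum_congr rfl fun d hd => ?_
  obtain ⟨m, rfl⟩ : ∃ m, n = m + d := ⟨n - d, by grind⟩
  rw [show m + d + 1 - 1 - d = m by omega, show 2 * (m + d) + 1 - m = m + 2 * d + 1 by omega,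
    show m + d - m = d by omega, show m + d + 1 + d = m + 2 * d + 1 by omega,
    two_pow_mul_choose_div_oddDoubleFactorial]
  ring

theorem sum_choose_pow_eq_stirling (n k : ℕ) (hn : 0 < n) :
    (1 / (Nat.factorial n : ℚ)) *
        ∑ i ∈ Finset.range n, (Nat.choose (2 * n) (2 * i + 1) : ℚ) * (i : ℚ) ^ k
      = ∑ d ∈ Finset.range n,
          (2 : ℚ) ^ (d + 1) * (Nat.choose (n + d) d : ℚ) / (oddDoubleFactorial d : ℚ)
            * Stir k (n - 1 - d) :=
  sum_choose_pow_eq_stirling_general n k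
end
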